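/- arXiv:1608.03322 — 2 statements merged into one kernel-verified Lean document; each statement's English description precedes it below -/
import Mathlib

section
/- Characterization of the selection function: for a queue q = q₀, q₁, …, q_{n−1}, we have select(I, L, q) = q_i if and only if i is the least index such that sg(q_i) ∈ I and sync(q_i) is disjoint from L ∪ ⋃_{j<i} sync(q_j). In particular, the selection function respects the temporal order of events in the queue that use the same synchronized entries: the synchronized entries of the selected event q_i are disjoint from the synchronized entries of every event preceding it in the queue. -/
/-- An event consists of a method signature `sg` and a set `sync` of
synchronized entries (pairs of a lock label and a data value). -/
structure Event (Sig Entry : Type*) where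
  sg : Sig
  sync : Set Entry

-- The selection function: `select I L q` returns the first event `e` in the
-- queue `q` whose synchronized entries are disjoint from the accumulated lock
-- set `L` and whose signature is supported by the interface `I`; the
-- synchronized entries of skipped events are added to the lock set.
-- `none` plays the role of `⊥` (undefined).
open Classical in
noncomputable def select {Sig Entry : Type*} (I : Set Sig) :
    Set Entry → List (Event Sig Entry) → Option (Event Sig Entry)
  | _, [] => none
  | L, e :: q =>
      if e.sync ∩ L = ∅ ∧ e.sg ∈ I then some e else select I (L ∪ e.sync) q

lemma union_cons {Sig Entry : Type*} (L : Set Entry) (a : Event Sig Entry)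
    (l : List (Event Sig Entry)) :
    L ∪ ⋃ x ∈ (a :: l), Event.sync x = (L ∪ a.sync) ∪ ⋃ x ∈ l, Event.sync x := by
  ext y; simp [List.mem_cons]; tauto

lemma select_iff {Sig Entry : Type*} (I : Set Sig) :
    ∀ (q : List (Event Sig Entry)) (L : Set Entry) (e : Event Sig Entry),
      select I L q = some e ↔
        ∃ (i : ℕ) (hi : i < q.length), q.get ⟨i, hi⟩ = e ∧
          ((q.get ⟨i, hi⟩).sg ∈ I ∧
            (q.get ⟨i, hi⟩).sync ∩ (L ∪ ⋃ x ∈ q.take i, x.sync) = ∅) ∧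
          ∀ (j : ℕ) (hj : j < q.length), j < i →
            ¬ ((q.get ⟨j, hj⟩).sg ∈ I ∧
                (q.get ⟨j, hj⟩).sync ∩ (L ∪ ⋃ x ∈ q.take j, x.sync) = ∅) := by
  intro q
  induction q with
  | nil => intro L e; simp [select]
  | cons a q ih =>
    intro L e
    by_cases h : a.sync ∩ L = ∅ ∧ a.sg ∈ I
    · rw [select, if_pos h]
      constructor
      · rintro he
        refine ⟨0, by simp, by simpa using (Option.some.injEq _ _ ▸ he : a = e), ⟨h.2, ?_⟩, ?_⟩
        · simpa using h.1
        · intro j hj hj0; omega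
      · rintro ⟨i, hi, hget, _, hmin⟩
        rcases Nat.eq_zero_or_pos i with rfl | hpos
        · simpa using hget ▸ rfl
        · exact absurd ⟨h.2, by simpa using h.1⟩ (hmin 0 (by simp) hpos)
    · rw [select, if_neg h, ih]
      constructor
      · rintro ⟨i, hi, hget, ⟨hI, hdisj⟩, hmin⟩
        refine ⟨i + 1, by simpa using Nat.succ_lt_succ hi, by simpa using hget, ⟨?_, ?_⟩, ?_⟩
        · simpa using hI
        · rw [List.take_succ_cons, union_cons]; simpa using hdisj
        · intro j hj hji
          cases j with
          | zero =>
            intro ⟨h1, h2⟩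
            exact h ⟨by simpa [Set.inter_comm] using h2, h1⟩
          | succ j =>
            have hj' : j < q.length := by simpa using hj
            have := hmin j hj' (by omega)
            intro ⟨h1, h2⟩
            apply this
            refine ⟨by simpa using h1, ?_⟩
            rw [List.take_succ_cons, union_cons] at h2
            simpa using h2
      · rintro ⟨i, hi, hget, ⟨hI, hdisj⟩, hmin⟩
        cases i with
        | zero =>
          exfalso
          apply h
          exact ⟨by simpa using hdisj, by simpa using hI⟩
        | succ i =>
          have hi' : i < q.length := by simpa using hi
          refine ⟨i, hi', by simpa using hget, ⟨by simpa using hI, ?_⟩, ?_⟩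
          · rw [List.take_succ_cons, union_cons] at hdisj
            simpa using hdisj
          · intro j hj hji
            have := hmin (j + 1) (by simpa using Nat.succ_lt_succ hj) (by omega)
            intro ⟨h1, h2⟩
            apply this
            refine ⟨by simpa using h1, ?_⟩
            rw [List.take_succ_cons, union_cons]
            simpa using h2

/-- characterization of the selection function.  For a queue
`q = q₀, q₁, …, q_{n−1}`, `select I L q` returns `q_i` if and only if `i` is
the least index such that `sg(q_i) ∈ I` and `sync(q_i)` is disjoint from
`L ∪ ⋃_{j<i} sync(q_j)`.  In particular, the selection function respects the
temporal order of events in the queue that use the same synchronized entries: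
the synchronized entries of the selected event `q_i` are disjoint from the
synchronized entries of every event preceding it in the queue. -/
theorem select_characterization {Sig Entry : Type*} (I : Set Sig) (L : Set Entry)
    (q : List (Event Sig Entry)) :
    (∀ e : Event Sig Entry,
      select I L q = some e ↔
        ∃ (i : ℕ) (hi : i < q.length), q.get ⟨i, hi⟩ = e ∧
          ((q.get ⟨i, hi⟩).sg ∈ I ∧
            (q.get ⟨i, hi⟩).sync ∩ (L ∪ ⋃ x ∈ q.take i, x.sync) = ∅) ∧
          ∀ (j : ℕ) (hj : j < q.length), j < i →
            ¬ ((q.get ⟨j, hj⟩).sg ∈ I ∧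
                (q.get ⟨j, hj⟩).sync ∩ (L ∪ ⋃ x ∈ q.take j, x.sync) = ∅)) ∧
    (∀ e : Event Sig Entry,
      select I L q = some e →
        ∃ (i : ℕ) (hi : i < q.length), q.get ⟨i, hi⟩ = e ∧
          ∀ (j : ℕ) (hj : j < q.length), j < i →
            e.sync ∩ (q.get ⟨j, hj⟩).sync = ∅) := by
  refine ⟨select_iff I q L, ?_⟩
  intro e he
  obtain ⟨i, hi, hget, ⟨_, hdisj⟩, _⟩ := (select_iff I q L e).1 he
  refine ⟨i, hi, hget, ?_⟩
  intro j hj hji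
  have hmem : q.get ⟨j, hj⟩ ∈ q.take i := by
    rw [List.mem_take_iff_getElem]
    exact ⟨j, by omega, by simp⟩
  rw [← hget]
  apply Set.eq_empty_of_subset_empty
  rw [← hdisj]
  intro y hy
  exact ⟨hy.1, Or.inr (Set.mem_biUnion hmem hy.2)⟩
end

section
/- Lock-disjointness invariant (Theorem 1, one-step preservation): let (L_k)_{k ∈ K} be a family of pairwise disjoint lock sets (the sets of synchronized entries currently held by the distinct active objects of an actor), and suppose select(I, ⋃_{k ∈ K} L_k, q) = e for some event e. Then the extended family consisting of the sets L_k together with the new lock set sync(e) is again pairwise disjoint; that is, sync(e) ∩ L_k = ∅ for every k ∈ K. Consequently, at run-time there are no two distinct asynchronous method invocations which hold the same synchronized entry. -/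

theorem select_disjoint {Sig Entry : Type*} (I : Set Sig) :
    ∀ (q : List (Event Sig Entry)) (L : Set Entry) (e : Event Sig Entry),
      select I L q = some e → e.sync ∩ L = ∅
  | [], L, e, h => by simp [select] at h
  | a :: q, L, e, h => by
      rw [select] at h
      split at h
      · cases h; exact ‹_ ∧ _›.1
      · have := select_disjoint I q (L ∪ a.sync) e h
        rw [Set.eq_empty_iff_forall_notMem] at this ⊢
        intro x hx
        exact this x ⟨hx.1, Or.inl hx.2⟩

/-- lock-disjointness invariant (one-step preservation).  Let
`(L k)_{k ∈ K}` be a family of pairwise disjoint lock sets (the sets of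
synchronized entries currently held by the distinct active objects of an
actor), and suppose `select I (⋃ k, L k) q = some e`.  Then the extended
family consisting of the sets `L k` together with the new lock set `sync(e)`
is again pairwise disjoint; that is, `sync(e) ∩ L k = ∅` for every `k ∈ K`.
Consequently, at run-time there are no two distinct asynchronous method
invocations which hold the same synchronized entry. -/
theorem select_preserves_pairwise_disjoint {Sig Entry K : Type*} (I : Set Sig)
    (L : K → Set Entry)
    (hdisj : ∀ k k' : K, k ≠ k' → L k ∩ L k' = ∅)
    (q : List (Event Sig Entry)) (e : Event Sig Entry)
    (h : select I (⋃ k, L k) q = some e) :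
    ∀ k : K, e.sync ∩ L k = ∅ := by
  intro k
  have := select_disjoint I q (⋃ k, L k) e h
  rw [Set.eq_empty_iff_forall_notMem] at this ⊢
  intro x hx
  exact this x ⟨hx.1, Set.mem_iUnion.2 ⟨k, hx.2⟩⟩
end
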